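/- Let R be a commutative Noetherian ring, p₁, …, pₙ distinct primes, r₁, …, rₙ positive integers, and suppose some finitely generated R-module M and proper submodule N satisfy P_M(N) = p₁^{r₁}⋯pₙ^{rₙ}. If p_i is minimal among {p₁, …, pₙ} (with respect to inclusion), then p₁^{r₁}⋯p_i^{r_i − 1}⋯pₙ^{rₙ} ≠ p₁^{r₁}⋯p_i^{r_i}⋯pₙ^{rₙ}. -/

import Mathlib

variable {R : Type*} [CommRing R] {M : Type*} [AddCommGroup M] [Module R M]

/-- The colon submodule `(N :_M I) = {x ∈ M | I • x ⊆ N}`. -/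
def colonSubmodule (N : Submodule R M) (I : Ideal R) : Submodule R M where
  carrier := {x | ∀ a ∈ I, a • x ∈ N}
  add_mem' := fun hx hy a ha => by simpa [smul_add] using N.add_mem (hx a ha) (hy a ha)
  zero_mem' := fun a _ => by simp
  smul_mem' := fun c x hx a ha => by
    rw [smul_comm]
    exact N.smul_mem c (hx a ha)

/-- `K` is a `p`-prime extension of `N`, i.e. `N` is a `p`-prime submodule of `K`. -/
def IsPrimeExt (p : Ideal R) (N K : Submodule R M) : Prop :=
  N < K ∧ N.colon K = p ∧ ∀ a : R, ∀ x ∈ K, a • x ∈ N → x ∈ N ∨ a ∈ p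

/-- The associated primes of `T / N` for submodules `N ≤ T ≤ M`. -/
def assOf (R : Type*) {M : Type*} [CommRing R] [AddCommGroup M] [Module R M]
    (N T : Submodule R M) : Set (Ideal R) :=
  associatedPrimes R ↥(T.map N.mkQ)

/-- `K` is a maximal `p`-prime extension of `N` inside `T`. -/
def IsMaximalPrimeExtIn (T : Submodule R M) (p : Ideal R) (N K : Submodule R M) : Prop :=
  K ≤ T ∧ IsPrimeExt p N K ∧ ∀ L ≤ T, IsPrimeExt p N L → ¬ K < L

/-- `K` is a regular `p`-prime extension of `N` inside `T`: a maximal `p`-prime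
extension where `p` is a maximal element of `Ass (T/N)`. -/
def IsRegularPrimeExtIn (T : Submodule R M) (p : Ideal R) (N K : Submodule R M) : Prop :=
  IsMaximalPrimeExtIn T p N K ∧ Maximal (· ∈ assOf R N T) p

/-- A regular prime extension (RPE) filtration inside `T` with primes `p i`. -/
def IsRPEFiltrationIn (T : Submodule R M) {n : ℕ}
    (F : Fin (n + 1) → Submodule R M) (p : Fin n → Ideal R) : Prop :=
  ∀ i : Fin n, IsRegularPrimeExtIn T (p i) (F i.castSucc) (F i.succ)

/-- The generalized prime ideal factorization of `N` in `T` is given by the multiset `s`: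
there is an RPE filtration of `T` over `N` whose multiset of primes is `s`. -/
def HasGPIF (N T : Submodule R M) (s : Multiset (Ideal R)) : Prop :=
  ∃ (n : ℕ) (F : Fin (n + 1) → Submodule R M) (p : Fin n → Ideal R),
    F 0 = N ∧ F (Fin.last n) = T ∧ IsRPEFiltrationIn T F p ∧ (List.ofFn p : Multiset (Ideal R)) = s

/-
Each step `F l ⊂ F (l+1)` of a regular prime extension filtration with prime `q l` satisfies
`F (l+1) = (F l :_M q l)`: an element killed by `q l` modulo `F l` can be adjoined without
destroying the `q l`-prime extension, because `q l` is maximal in `Ass (M / F l)`. Hence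
`F l = (N :_M q₀ ⋯ q_{l-1})`, and `(N :_M q₀ ⋯ q_{m-1}) = M`.

Let `k` be the last step with `q k = pᵢ`. The primes after `k` are among the `pⱼ`, differ from `pᵢ`,
hence are not contained in `pᵢ` by minimality, so their product `J` contains some `u ∉ pᵢ`.
Lowering the exponent of `pᵢ` gives `q₀ ⋯ q_{k-1} · J`; if that equals the full product, then
for `x ∈ F (k+1) \ F k` we get `u x ∈ (N :_M q₀ ⋯ q_{k-1}) = F k`, contradicting that `F k` is
`pᵢ`-prime in `F (k+1)`.
-/

theorem colonSubmodule_top (N : Submodule R M) : colonSubmodule N ⊤ = N := by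
  ext x
  exact ⟨fun hx => by simpa using hx 1 trivial, fun hx a _ => N.smul_mem a hx⟩

theorem colonSubmodule_colonSubmodule (N : Submodule R M) (I J : Ideal R) :
    colonSubmodule (colonSubmodule N I) J = colonSubmodule N (I * J) := by
  ext x
  refine ⟨fun hx t ht => ?_, fun hx b hb a ha => ?_⟩
  · refine Submodule.mul_induction_on ht (fun a ha b hb => ?_) fun s t hs ht => ?_
    · rw [mul_smul]
      exact hx b hb a ha
    · rw [add_smul]
      exact N.add_mem hs ht
  · rw [smul_smul]
    exact hx _ (Ideal.mul_mem_mul ha hb)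

theorem assOf_top (N : Submodule R M) : assOf R N ⊤ = associatedPrimes R (M ⧸ N) := by
  rw [assOf, Submodule.map_top, Submodule.range_mkQ]
  exact LinearEquiv.AssociatedPrimes.eq (Submodule.topEquiv (R := R) (M := M ⧸ N))

theorem IsPrimeExt.le_colonSubmodule {p : Ideal R} {N K : Submodule R M}
    (h : IsPrimeExt p N K) : K ≤ colonSubmodule N p := fun x hx _ ha =>
  Submodule.mem_colon.mp (h.2.1 ▸ ha) x hx

theorem IsRegularPrimeExtIn.isPrime {T A B : Submodule R M} {q : Ideal R}
    (h : IsRegularPrimeExtIn T q A B) : q.IsPrime :=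
  IsAssociatedPrime.isPrime h.2.1

theorem eq_colonSubmodule_prod {m : ℕ} {F : Fin (m + 1) → Submodule R M} {q : Fin m → Ideal R}
    (hF : ∀ j, F j.succ = colonSubmodule (F j.castSucc) (q j)) (l : Fin (m + 1)) :
    F l = colonSubmodule (F 0) (∏ j with j.castSucc < l, q j) := by
  induction l using Fin.induction with
  | zero => simp [colonSubmodule_top]
  | succ l ih =>
    have hfilter : Finset.univ.filter (fun j : Fin m => j.castSucc < l.succ) =
        insert l (Finset.univ.filter fun j : Fin m => j.castSucc < l.castSucc) := by
      ext j
      simp [Fin.castSucc_lt_succ_iff, le_iff_eq_or_lt]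
    rw [hF, ih, colonSubmodule_colonSubmodule, hfilter, Finset.prod_insert (by simp), mul_comm]

theorem Multiset.sum_replicate_eq_cons {ι α : Type*} [Fintype ι] [DecidableEq ι] (f : ι → α)
    {r : ι → ℕ} {i : ι} (hi : 0 < r i) :
    ∑ j, Multiset.replicate (r j) (f j) =
      f i ::ₘ ∑ j, Multiset.replicate (if j = i then r j - 1 else r j) (f j) := by
  have hrest : ∑ j ∈ Finset.univ.erase i,
      Multiset.replicate (if j = i then r j - 1 else r j) (f j) =
        ∑ j ∈ Finset.univ.erase i, Multiset.replicate (r j) (f j) :=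
    Finset.sum_congr rfl fun j hj => by rw [if_neg (Finset.ne_of_mem_erase hj)]
  rw [← Finset.add_sum_erase _ _ (Finset.mem_univ i), ← Finset.add_sum_erase _ _ (Finset.mem_univ i),
    hrest, if_pos rfl, ← Multiset.cons_add, ← Multiset.replicate_succ, Nat.sub_one_add_one hi.ne']

theorem Multiset.prod_sum_replicate {ι α : Type*} [CommMonoid α] (s : Finset ι) (f : ι → α)
    (r : ι → ℕ) : (∑ j ∈ s, Multiset.replicate (r j) (f j)).prod = ∏ j ∈ s, f j ^ r j := by
  simp only [Multiset.prod_sum, Multiset.prod_replicate]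

theorem Finset.prod_erase_eq_prod_lt_mul_prod_gt {ι α : Type*} [Fintype ι] [LinearOrder ι]
    [CommMonoid α] (f : ι → α) (k : ι) :
    ∏ j ∈ Finset.univ.erase k, f j = (∏ j with j < k, f j) * ∏ j with k < j, f j := by
  rw [← Finset.prod_union (Finset.disjoint_filter.mpr fun j _ h h' => lt_asymm h h')]
  congr 1
  ext j
  simp [lt_or_lt_iff_ne]

theorem Multiset.prod_eq_of_coe_ofFn_eq_cons {α : Type*} [CommMonoid α] {m : ℕ}
    {q : Fin m → α} {k : Fin m} {s : Multiset α} (h : (List.ofFn q : Multiset α) = q k ::ₘ s) :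
    s.prod = (∏ j with j < k, q j) * ∏ j with k < j, q j := by
  classical
  have hs : s = (Finset.univ.erase k).val.map q := by
    rw [← Multiset.cons_inj_right (q k), ← h, ← Multiset.map_cons, Finset.erase_val,
      Multiset.cons_erase (Finset.mem_univ k), Fin.univ_val_map]
  rw [hs, ← Finset.prod_eq_multiset_prod, Finset.prod_erase_eq_prod_lt_mul_prod_gt]

theorem mem_range_of_coe_ofFn_eq_sum_replicate {α : Type*} {m n : ℕ} {q : Fin m → α}
    {p : Fin n → α} {r : Fin n → ℕ}
    (h : (List.ofFn q : Multiset α) = ∑ j, Multiset.replicate (r j) (p j)) (l : Fin m) :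
    q l ∈ Set.range p := by
  have hl : q l ∈ (List.ofFn q : Multiset α) :=
    Multiset.mem_coe.mpr ((List.mem_ofFn' q (q l)).mpr ⟨l, rfl⟩)
  rw [h] at hl
  simp only [Multiset.mem_sum, Multiset.mem_replicate] at hl
  obtain ⟨j, -, -, hj⟩ := hl
  exact ⟨j, hj.symm⟩

section Noetherian

variable [IsNoetherianRing R]

/-- The annihilator of `x` modulo `N` lies in an associated prime of `M / N`, which contains `q`
and hence equals `q`. -/
theorem mem_of_smul_mem_of_maximal_assOf {q : Ideal R} {N : Submodule R M}
    (hq : Maximal (· ∈ assOf R N ⊤) q) {x : M} (hx : x ∉ N) (hqx : x ∈ colonSubmodule N q)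
    {a : R} (hax : a • x ∈ N) : a ∈ q := by
  have hx0 : N.mkQ x ≠ 0 := by simpa [Submodule.Quotient.mk_eq_zero] using hx
  obtain ⟨P, hP, hannP⟩ := exists_le_isAssociatedPrime_of_isNoetherianRing R (N.mkQ x) hx0
  have hann : ∀ c : R, c • x ∈ N → c ∈ P := fun c hc => hannP <| by
    rw [Submodule.mem_colon_singleton, Submodule.mem_bot, ← map_smul,
      Submodule.mkQ_apply, Submodule.Quotient.mk_eq_zero]
    exact hc
  have hPq : P ≤ q := hq.2 (by rw [assOf_top]; exact hP) fun c hc => hann c (hqx c hc)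
  exact hPq (hann a hax)

theorem IsRegularPrimeExtIn.colonSubmodule_le {q : Ideal R} {A B : Submodule R M}
    (h : IsRegularPrimeExtIn ⊤ q A B) : colonSubmodule A q ≤ B := by
  obtain ⟨⟨-, hAB, hmax⟩, hass⟩ := h
  intro y hy
  by_contra hyB
  set K := B ⊔ Submodule.span R {y}
  have hK : K ≤ colonSubmodule A q :=
    sup_le hAB.le_colonSubmodule ((Submodule.span_singleton_le_iff_mem _ _).mpr hy)
  have hAK : IsPrimeExt q A K := by
    refine ⟨hAB.1.trans_le le_sup_left, le_antisymm ?_ ?_, ?_⟩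
    · exact hAB.2.1 ▸ Submodule.colon_mono le_rfl (SetLike.coe_subset_coe.mpr le_sup_left)
    · exact fun c hc => Submodule.mem_colon.mpr fun x hx => hK hx c hc
    · intro a x hx hax
      by_cases hxA : x ∈ A
      · exact Or.inl hxA
      · exact Or.inr (mem_of_smul_mem_of_maximal_assOf hass hxA (hK hx) hax)
  exact hmax K le_top hAK <| SetLike.lt_iff_le_and_exists.mpr
    ⟨le_sup_left, y, Submodule.mem_sup_right (Submodule.mem_span_singleton_self y), hyB⟩

theorem IsRegularPrimeExtIn.eq_colonSubmodule {q : Ideal R} {A B : Submodule R M}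
    (h : IsRegularPrimeExtIn ⊤ q A B) : B = colonSubmodule A q :=
  le_antisymm h.1.2.1.le_colonSubmodule h.colonSubmodule_le

theorem IsRPEFiltrationIn.not_prod_lt_mul_le {m : ℕ}
    {F : Fin (m + 1) → Submodule R M} {q : Fin m → Ideal R} (hF : IsRPEFiltrationIn ⊤ F q)
    (hlast : F (Fin.last m) = ⊤) (k : Fin m) {J : Ideal R} (hJ : ¬ J ≤ q k) :
    ¬ (∏ j with j < k, q j) * J ≤ ∏ j, q j := by
  intro hle
  have hcolon := eq_colonSubmodule_prod fun j => (hF j).eq_colonSubmodule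
  obtain ⟨⟨-, ⟨hlt, -, hprime⟩, -⟩, -⟩ := hF k
  obtain ⟨u, huJ, huq⟩ := SetLike.not_le_iff_exists.mp hJ
  obtain ⟨x, hx, hxk⟩ := SetLike.exists_of_lt hlt
  have hxN : x ∈ colonSubmodule (F 0) (∏ j, q j) := by
    have htop := hcolon (Fin.last m)
    simp only [hlast, Fin.castSucc_lt_last, Finset.filter_true] at htop
    exact htop ▸ Submodule.mem_top
  have hux : u • x ∈ F k.castSucc := by
    rw [hcolon]
    intro t ht
    rw [smul_smul]
    exact hxN _ (hle (Ideal.mul_mem_mul (by simpa using ht) huJ))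
  exact (hprime u x hx hux).elim hxk huq

end Noetherian

theorem prod_pow_ne_of_minimal_general {R : Type*} [CommRing R] [IsNoetherianRing R]
    {M : Type*} [AddCommGroup M] [Module R M]
    {n : ℕ} (p : Fin n → Ideal R) (r : Fin n → ℕ) (hr : ∀ i, 0 < r i)
    (N : Submodule R M)
    (h : HasGPIF N ⊤ (∑ i, Multiset.replicate (r i) (p i)))
    (i : Fin n) (hmin : Minimal (· ∈ Set.range p) (p i)) :
    (∏ j, p j ^ (if j = i then r j - 1 else r j)) ≠ ∏ j, p j ^ r j := by
  classical
  obtain ⟨m, F, q, -, hlast, hF, hq⟩ := h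
  have hprod : ∏ j, q j = ∏ j, p j ^ r j := by
    rw [← List.prod_ofFn, ← Multiset.prod_coe, hq, Multiset.prod_sum_replicate]
  have hqp := mem_range_of_coe_ofFn_eq_sum_replicate hq
  rw [Multiset.sum_replicate_eq_cons p (hr i)] at hq
  have hpi : ∃ l, q l = p i :=
    (List.mem_ofFn' q (p i)).mp (Multiset.mem_coe.mp (hq ▸ Multiset.mem_cons_self _ _))
  obtain ⟨k, hk, hklast⟩ := Set.exists_max_image {l | q l = p i} id (Set.toFinite _) hpi
  have hJ : ¬ ∏ j with k < j, q j ≤ q k := by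
    rw [(hF k).isPrime.prod_le]
    rintro ⟨l, hl, hle⟩
    rw [hk] at hle
    exact (Finset.mem_filter.mp hl).2.not_ge (hklast l (le_antisymm hle (hmin.2 (hqp l) hle)))
  intro heq
  refine hF.not_prod_lt_mul_le hlast k hJ ?_
  rw [hprod, ← heq, ← Multiset.prod_sum_replicate,
    ← Multiset.prod_eq_of_coe_ofFn_eq_cons (by rwa [hk])]

/-- If `p₁^{r₁} ⋯ pₙ^{rₙ}` is the generalized prime ideal factorization of some proper
submodule and `pᵢ` is minimal among `{p₁, …, pₙ}`, then lowering the exponent of `pᵢ`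
by one changes the product ideal. -/
theorem prod_pow_ne_of_minimal {R : Type*} [CommRing R] [IsNoetherianRing R]
    {M : Type*} [AddCommGroup M] [Module R M] [Module.Finite R M]
    {n : ℕ} (p : Fin n → Ideal R) (hprime : ∀ i, (p i).IsPrime)
    (hdist : Function.Injective p) (r : Fin n → ℕ) (hr : ∀ i, 0 < r i)
    (N : Submodule R M) (hN : N ≠ ⊤)
    (h : HasGPIF N ⊤ (∑ i, Multiset.replicate (r i) (p i)))
    (i : Fin n) (hmin : Minimal (· ∈ Set.range p) (p i)) :
    (∏ j, p j ^ (if j = i then r j - 1 else r j)) ≠ ∏ j, p j ^ r j :=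
  prod_pow_ne_of_minimal_general p r hr N h i hmin
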